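/- Let N ≥ 3 be an integer and let m(z) := ⌈-N·arg(z)/(2π)⌉ for nonzero complex z, where arg(z) ∈ [-π, π). Let u, v, w be nonzero complex numbers satisfying the four congruences m(u⁻¹w) + m(uw⁻¹) ≡ 0, m(u⁻¹v) ≡ m(v) - m(u), m(u⁻¹w) ≡ m(w) - m(u), and m(v⁻¹w) ≡ m(w) - m(v) (all modulo N). Then m(v⁻¹u) + m(vu⁻¹) ≡ 0 (mod N). -/

import Mathlib

/-!
Put `θ(z) := -N · arg(z) / (2π)`, so that `m(z) = ⌈θ(z)⌉`. Since `arg(u⁻¹w) ≡ arg w - arg u`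
modulo `2π`, we get `m(u⁻¹w) ≡ ⌈θ(w) - θ(u)⌉` modulo `N`. The defects `⌈t⌉ + ⌈-t⌉` and
`⌈s - t⌉ - (⌈s⌉ - ⌈t⌉)` lie in `{0, 1}`, so for `N ≥ 2` each hypothesis says that a defect vanishes.
Then `θ(w) - θ(u)` is an integer equal to `⌈θ(w)⌉ - ⌈θ(u)⌉ = ⌈θ(v) - θ(u)⌉ + ⌈θ(w) - θ(v)⌉`,
and as each ceiling dominates its argument, `θ(v) - θ(u)` is an integer too.
-/

/-- The principal argument of a nonzero complex number, normalized to lie in `[-π, π)`. -/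
noncomputable def parg (z : ℂ) : ℝ :=
  if Complex.arg z = Real.pi then -Real.pi else Complex.arg z

/-- `m(z) := ⌈-N·arg(z)/(2π)⌉` where `arg(z) ∈ [-π, π)`. -/
noncomputable def mfun (N : ℤ) (z : ℂ) : ℤ :=
  ⌈(-(N : ℝ) * parg z) / (2 * Real.pi)⌉

open Real

namespace Int

variable {R : Type*} [Ring R] [LinearOrder R] [IsOrderedRing R] [FloorRing R]

lemma eq_zero_of_dvd_of_nonneg_of_le_one {N d : ℤ} (hN : 1 < N) (h₀ : 0 ≤ d) (h₁ : d ≤ 1)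
    (hd : N ∣ d) : d = 0 :=
  eq_zero_of_dvd_of_nonneg_of_lt h₀ (by omega) hd

lemma ceil_add_ceil_neg_nonneg (t : R) : 0 ≤ ⌈t⌉ + ⌈-t⌉ := by
  rw [ceil_neg]
  linarith [floor_le_ceil t]

lemma ceil_add_ceil_neg_le_one (t : R) : ⌈t⌉ + ⌈-t⌉ ≤ 1 := by
  rw [ceil_neg]
  linarith [ceil_le_floor_add_one t]

lemma ceil_add_ceil_neg_eq_zero_iff (t : R) : ⌈t⌉ + ⌈-t⌉ = 0 ↔ (⌈t⌉ : R) = t := by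
  constructor
  · intro h
    have hfloor : ⌊t⌋ = ⌈t⌉ := by rw [ceil_neg] at h; omega
    exact le_antisymm (hfloor ▸ floor_le t) (le_ceil t)
  · intro h
    rw [← h, ← cast_neg, ceil_intCast, ceil_intCast, add_neg_cancel]

lemma ceil_add_ceil_neg_eq_zero_of_modEq {N : ℤ} (hN : 1 < N) {t : R}
    (h : ⌈t⌉ + ⌈-t⌉ ≡ 0 [ZMOD N]) : ⌈t⌉ + ⌈-t⌉ = 0 :=
  eq_zero_of_dvd_of_nonneg_of_le_one hN (ceil_add_ceil_neg_nonneg t)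
    (ceil_add_ceil_neg_le_one t) (modEq_zero_iff_dvd.1 h)

lemma ceil_sub_eq_of_modEq {N : ℤ} (hN : 1 < N) {s t : R}
    (h : ⌈s - t⌉ ≡ ⌈s⌉ - ⌈t⌉ [ZMOD N]) : ⌈s - t⌉ = ⌈s⌉ - ⌈t⌉ := by
  have hle : ⌈s⌉ ≤ ⌈s - t⌉ + ⌈t⌉ := by simpa using ceil_add_le (s - t) t
  have hge : ⌈s - t⌉ + ⌈t⌉ ≤ ⌈s⌉ + 1 := by simpa using ceil_add_ceil_le (s - t) t
  have hd := eq_zero_of_dvd_of_nonneg_of_le_one hN (by omega) (by omega) (modEq_iff_dvd.1 h.symm)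
  omega

/-- If `⌈·⌉` is additive along `a, b, c` and `c - a` is an integer, then so is `b - a`. -/
lemma ceil_add_ceil_neg_sub_eq_zero {a b c : R} (hca : ⌈c - a⌉ + ⌈-(c - a)⌉ = 0)
    (hba : ⌈b - a⌉ = ⌈b⌉ - ⌈a⌉) (hca' : ⌈c - a⌉ = ⌈c⌉ - ⌈a⌉) (hcb : ⌈c - b⌉ = ⌈c⌉ - ⌈b⌉) :
    ⌈b - a⌉ + ⌈-(b - a)⌉ = 0 := by
  rw [ceil_add_ceil_neg_eq_zero_iff] at hca ⊢
  have hsum : ((⌈b - a⌉ + ⌈c - b⌉ : ℤ) : R) = (b - a) + (c - b) := by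
    rw [hba, hcb, show ⌈b⌉ - ⌈a⌉ + (⌈c⌉ - ⌈b⌉) = ⌈c - a⌉ by omega, hca]
    abel
  push_cast at hsum
  refine le_antisymm (not_lt.1 fun hlt => ?_) (le_ceil _)
  exact (add_lt_add_of_lt_of_le hlt (le_ceil (c - b))).ne hsum.symm

end Int

noncomputable def scaledArg (N : ℤ) (z : ℂ) : ℝ :=
  -(N : ℝ) * parg z / (2 * π)

lemma mfun_eq_ceil_scaledArg (N : ℤ) (z : ℂ) : mfun N z = ⌈scaledArg N z⌉ := rfl

lemma parg_coe_angle (z : ℂ) : (parg z : Real.Angle) = Complex.arg z := by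
  unfold parg
  split_ifs with h
  · rw [h, Real.Angle.coe_neg, Real.Angle.neg_coe_pi]
  · rfl

lemma exists_parg_inv_mul_eq {a b : ℂ} (ha : a ≠ 0) (hb : b ≠ 0) :
    ∃ k : ℤ, parg (a⁻¹ * b) = parg b - parg a + 2 * π * k := by
  have h : (parg (a⁻¹ * b) : Real.Angle) = (parg b - parg a : ℝ) := by
    rw [parg_coe_angle, Complex.arg_mul_coe_angle (inv_ne_zero ha) hb, Complex.arg_inv_coe_angle,
      Real.Angle.coe_sub, parg_coe_angle, parg_coe_angle]
    abel
  obtain ⟨k, hk⟩ := Real.Angle.angle_eq_iff_two_pi_dvd_sub.1 h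
  exact ⟨k, by linarith⟩

lemma mfun_inv_mul_modEq (N : ℤ) {a b : ℂ} (ha : a ≠ 0) (hb : b ≠ 0) :
    mfun N (a⁻¹ * b) ≡ ⌈scaledArg N b - scaledArg N a⌉ [ZMOD N] := by
  obtain ⟨k, hk⟩ := exists_parg_inv_mul_eq ha hb
  have hscaled : scaledArg N (a⁻¹ * b) = scaledArg N b - scaledArg N a + ((N * -k : ℤ) : ℝ) := by
    simp only [scaledArg, hk]
    push_cast
    field_simp
    ring
  rw [mfun_eq_ceil_scaledArg, hscaled, Int.ceil_add_intCast]
  exact Int.modEq_add_fac_self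

theorem stmt4 (N : ℤ) (hN : 3 ≤ N) (u v w : ℂ) (hu : u ≠ 0) (hv : v ≠ 0) (hw : w ≠ 0)
    (h1 : mfun N (u⁻¹ * w) + mfun N (u * w⁻¹) ≡ 0 [ZMOD N])
    (h2 : mfun N (u⁻¹ * v) ≡ mfun N v - mfun N u [ZMOD N])
    (h3 : mfun N (u⁻¹ * w) ≡ mfun N w - mfun N u [ZMOD N])
    (h4 : mfun N (v⁻¹ * w) ≡ mfun N w - mfun N v [ZMOD N]) :
    mfun N (v⁻¹ * u) + mfun N (v * u⁻¹) ≡ 0 [ZMOD N] := by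
  have hN' : 1 < N := by omega
  set θ := scaledArg N
  have hm {a b : ℂ} (ha : a ≠ 0) (hb : b ≠ 0) :
      mfun N (a⁻¹ * b) + mfun N (a * b⁻¹) ≡ ⌈θ b - θ a⌉ + ⌈-(θ b - θ a)⌉ [ZMOD N] := by
    rw [neg_sub, mul_comm a]
    exact (mfun_inv_mul_modEq N ha hb).add (mfun_inv_mul_modEq N hb ha)
  have hwu := Int.ceil_add_ceil_neg_eq_zero_of_modEq hN' ((hm hu hw).symm.trans h1)
  have hvu := Int.ceil_sub_eq_of_modEq hN' ((mfun_inv_mul_modEq N hu hv).symm.trans h2)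
  have hwu' := Int.ceil_sub_eq_of_modEq hN' ((mfun_inv_mul_modEq N hu hw).symm.trans h3)
  have hwv := Int.ceil_sub_eq_of_modEq hN' ((mfun_inv_mul_modEq N hv hw).symm.trans h4)
  have huv : ⌈θ u - θ v⌉ + ⌈-(θ u - θ v)⌉ = 0 := by
    rw [neg_sub, add_comm, ← neg_sub (θ v)]
    exact Int.ceil_add_ceil_neg_sub_eq_zero hwu hvu hwu' hwv
  exact huv ▸ hm hv hu
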